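/- arXiv:2208.13023 — 5 statements merged into one kernel-verified Lean document; each statement's English description precedes it below -/
import Mathlib

section
/- Let n and k be positive integers with n > 1, k ≥ 3 and (n,k) ≠ (2,6). Then n^k − 1 has a primitive prime divisor, i.e., a prime t dividing n^k − 1 such that t does not divide n^i − 1 for any 1 ≤ i ≤ k−1. -/
/-!
Let `t` be a prime dividing `Φ_k(n)` and write `k = t ^ e * m` with `t ∤ m`. Modulo `t`, `n` is
a primitive `m`-th root of unity, so `t` is a primitive prime divisor of `n ^ k - 1` exactly when
`e = 0`. If there is none, every prime factor `t` of `Φ_k(n)` has `e ≥ 1` and `m ∣ t - 1`, so it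
is the largest prime factor of `k`; moreover `t ^ 2 ∤ Φ_k(n)`, because `Φ_k(n)` divides
`1 + y + ⋯ + y ^ (t - 1)` with `y = n ^ (k / t) ≡ 1 (mod t)`. Hence `Φ_k(n) = t`, i.e.
`Φ_{mt}(N) = t` for `N = n ^ t ^ (e - 1)`. This is too small: for `m = 1`,
`Φ_t(N) = 1 + N + ⋯ + N ^ (t - 1) > t`; for `m ≥ 2`, `Φ_m(N ^ t) = Φ_{mt}(N) Φ_m(N)` and the bounds
`(x - 1) ^ φ(m) < Φ_m(x) ≤ (x + 1) ^ φ(m)` give `(N ^ t - 1) ^ φ(m) < (t (N + 1)) ^ φ(m)`, which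
fails unless `N = 2` and `m * t = 6`.
-/

open Polynomial Finset

namespace Zsigmondy

theorem cyclotomic_mul_dvd_geom_sum (R : Type*) [CommRing R] [IsDomain R] {m q : ℕ}
    (hm : 0 < m) (hq : 1 < q) : cyclotomic (m * q) R ∣ ∑ j ∈ range q, (X ^ m) ^ j := by
  have hdiv : m ∈ (m * q).properDivisors :=
    Nat.mem_properDivisors.mpr ⟨dvd_mul_right m q, lt_mul_of_one_lt_right hm hq⟩
  have h := X_pow_sub_one_mul_cyclotomic_dvd_X_pow_sub_one_of_dvd R hdiv
  rwa [pow_mul, ← mul_geom_sum (X ^ m) q, mul_dvd_mul_iff_left] at h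
  simpa using X_pow_sub_C_ne_zero hm (1 : R)

theorem expand_prime_pow_cyclotomic (R : Type*) [CommRing R] {t b : ℕ} (ht : t.Prime)
    (htb : t ∣ b) (j : ℕ) : expand R (t ^ j) (cyclotomic b R) = cyclotomic (b * t ^ j) R := by
  induction j with
  | zero => simp
  | succ j ih =>
    rw [pow_succ', expand_mul, ih, cyclotomic_expand_eq_cyclotomic ht (htb.mul_right _),
      mul_assoc, mul_comm (t ^ j)]

theorem dvd_pow_sub_one_iff_orderOf_dvd {t n : ℕ} (hn : 0 < n) (i : ℕ) :
    t ∣ n ^ i - 1 ↔ orderOf (n : ZMod t) ∣ i := by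
  rw [orderOf_dvd_iff_pow_eq_one, ← ZMod.natCast_eq_zero_iff,
    Nat.cast_sub (Nat.one_le_pow _ _ hn), sub_eq_zero, Nat.cast_pow, Nat.cast_one]

theorem dvd_pow_sub_one_of_dvd_cyclotomic_eval {n k t : ℕ} (hn : 0 < n)
    (h : (t : ℤ) ∣ (cyclotomic k ℤ).eval (n : ℤ)) : t ∣ n ^ k - 1 := by
  have hdvd : (cyclotomic k ℤ).eval (n : ℤ) ∣ (n : ℤ) ^ k - 1 := by
    simpa using eval_dvd (x := (n : ℤ)) (cyclotomic.dvd_X_pow_sub_one k ℤ)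
  rw [← Int.natCast_dvd_natCast, Nat.cast_sub (Nat.one_le_pow _ _ hn)]
  exact_mod_cast h.trans hdvd

theorem orderOf_eq_of_dvd_cyclotomic_eval {t a m : ℕ} [Fact t.Prime] (htm : ¬t ∣ m) {x : ℤ}
    (h : (t : ℤ) ∣ (cyclotomic (t ^ a * m) ℤ).eval x) : orderOf (x : ZMod t) = m := by
  have : NeZero (m : ZMod t) := ⟨by rwa [Ne, ZMod.natCast_eq_zero_iff]⟩
  have hroot : (cyclotomic (t ^ a * m) (ZMod t)).IsRoot (x : ZMod t) := by
    rwa [IsRoot, ← map_cyclotomic_int, eval_intCast_map, Int.cast_id, eq_intCast,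
      ZMod.intCast_zmod_eq_zero_iff_dvd]
  exact (isRoot_cyclotomic_prime_pow_mul_iff_of_charP.mp hroot).eq_orderOf.symm

theorem exists_eq_pow_succ_mul_of_dvd_cyclotomic_eval {n k t i : ℕ} (hn : 0 < n) (ht : t.Prime)
    (hk : 0 < k) (hΦ : (t : ℤ) ∣ (cyclotomic k ℤ).eval (n : ℤ)) (hi : 0 < i) (hik : i < k)
    (hti : t ∣ n ^ i - 1) : ∃ a m, k = t ^ (a + 1) * m ∧ ¬t ∣ m ∧ m ∣ t - 1 := by
  have := Fact.mk ht
  obtain ⟨e, m, htm, rfl⟩ := Nat.exists_eq_pow_mul_and_not_dvd hk.ne' t ht.ne_one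
  have hord : orderOf (n : ZMod t) = m := by
    simpa using orderOf_eq_of_dvd_cyclotomic_eval htm hΦ
  have hmi : m ∣ i := hord ▸ (dvd_pow_sub_one_iff_orderOf_dvd hn i).mp hti
  obtain _ | a := e
  · rw [pow_zero, one_mul] at hik
    exact absurd (Nat.le_of_dvd hi hmi) (by omega)
  have hm0 : m ≠ 0 := by rintro rfl; exact htm (dvd_zero t)
  refine ⟨a, m, rfl, htm, hord ▸ ZMod.orderOf_dvd_card_sub_one fun h0 => ?_⟩
  exact hm0 (by rw [← hord, h0, orderOf_zero])

theorem le_of_dvd_prime_pow_mul {s t a m : ℕ} (hs : s.Prime) (ht : t.Prime) (hm : m ∣ t - 1)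
    (hst : s ∣ t ^ a * m) : s ≤ t := by
  rcases hs.dvd_mul.mp hst with h | h
  · exact ((Nat.prime_dvd_prime_iff_eq hs ht).mp (hs.dvd_of_dvd_pow h)).le
  · have := ht.two_le
    have := Nat.le_of_dvd (by omega) hm
    have := Nat.le_of_dvd (Nat.pos_of_dvd_of_pos hm (by omega)) h
    omega

theorem eq_of_prime_pow_succ_mul_eq {s t a b m m' : ℕ} (hs : s.Prime) (ht : t.Prime)
    (hm : m ∣ t - 1) (hm' : m' ∣ s - 1) (h : s ^ (b + 1) * m' = t ^ (a + 1) * m) : s = t :=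
  le_antisymm
    (le_of_dvd_prime_pow_mul hs ht hm (h ▸ dvd_mul_of_dvd_left (dvd_pow_self s b.succ_ne_zero) _))
    (le_of_dvd_prime_pow_mul ht hs hm' (h ▸ dvd_mul_of_dvd_left (dvd_pow_self t a.succ_ne_zero) _))

theorem not_sq_dvd_geom_sum {t : ℕ} (ht : t.Prime) {y : ℤ} (hy : (t : ℤ) ∣ y - 1)
    (h2 : t = 2 → (4 : ℤ) ∣ y - 1) : ¬(t : ℤ) ^ 2 ∣ ∑ j ∈ range t, y ^ j := by
  intro hsq
  rcases ht.eq_two_or_odd' with rfl | hodd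
  · obtain ⟨b, hb⟩ := h2 rfl
    obtain ⟨c, hc⟩ := hsq
    norm_num [sum_range_succ] at hc
    omega
  · obtain ⟨b, hb⟩ := hy
    obtain rfl : y = 1 + t * b := by linarith
    have h := odd_sq_dvd_geom_sum₂_sub (R := ℤ) 1 b hodd
    simp only [one_pow, mul_one] at h
    have htt : (t : ℤ) ^ 2 ∣ (t : ℤ) ^ 1 := by simpa using (dvd_sub_right hsq).mp h
    have := (Nat.pow_dvd_pow_iff_le_right ht.one_lt).mp (by exact_mod_cast htt)
    omega

theorem not_sq_dvd_cyclotomic_eval {t a m : ℕ} (ht : t.Prime) (htm : ¬t ∣ m) {x : ℤ}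
    (hΦ : (t : ℤ) ∣ (cyclotomic (t ^ (a + 1) * m) ℤ).eval x) (h2 : t = 2 → 0 < a) :
    ¬(t : ℤ) ^ 2 ∣ (cyclotomic (t ^ (a + 1) * m) ℤ).eval x := by
  have := Fact.mk ht
  have hm : 0 < m := Nat.pos_of_ne_zero (by rintro rfl; exact htm (dvd_zero t))
  have hord := orderOf_eq_of_dvd_cyclotomic_eval htm hΦ
  have hgeom :
      (cyclotomic (t ^ (a + 1) * m) ℤ).eval x ∣ ∑ j ∈ range t, (x ^ (t ^ a * m)) ^ j := by
    have h := eval_dvd (x := x)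
      (cyclotomic_mul_dvd_geom_sum ℤ (Nat.mul_pos (pow_pos ht.pos a) hm) ht.one_lt)
    rw [show t ^ a * m * t = t ^ (a + 1) * m by ring] at h
    simpa [eval_finsetSum] using h
  have hy : (t : ℤ) ∣ x ^ (t ^ a * m) - 1 := by
    rw [← ZMod.intCast_eq_intCast_iff_dvd_sub, Int.cast_one, Int.cast_pow,
      orderOf_dvd_iff_pow_eq_one.mp (hord ▸ dvd_mul_left m (t ^ a))]
  have hy4 : t = 2 → (4 : ℤ) ∣ x ^ (t ^ a * m) - 1 := by
    rintro rfl
    have hodd : Odd x := by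
      rw [← Int.not_even_iff_odd, even_iff_two_dvd]
      exact fun h2x => hm.ne' (by
        rw [← hord, (ZMod.intCast_zmod_eq_zero_iff_dvd x 2).mpr (by exact_mod_cast h2x),
          orderOf_zero])
    obtain ⟨b, rfl⟩ := Nat.exists_eq_add_of_lt (h2 rfl)
    have hsq := Int.sq_mod_four_eq_one_of_odd (hodd.pow (n := 2 ^ b * m))
    rw [← pow_mul, show 2 ^ b * m * 2 = 2 ^ (0 + b + 1) * m by ring] at hsq
    omega
  exact fun hsq => not_sq_dvd_geom_sum ht hy hy4 (hsq.trans hgeom)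

theorem eq_of_unique_prime_dvd_of_not_sq_dvd {c t : ℕ} (hc : c ≠ 1)
    (h : ∀ s, s.Prime → s ∣ c → s = t) (ht : ¬t ^ 2 ∣ c) : c = t := by
  have hc0 : c ≠ 0 := by rintro rfl; exact ht (dvd_zero _)
  have hpow := Nat.eq_prime_pow_of_unique_prime_dvd hc0 fun hs hsc => h _ hs hsc
  set e := c.primeFactorsList.length
  obtain _ | _ | e := e
  · exact absurd hpow hc
  · rwa [pow_one] at hpow
  · exact absurd (hpow ▸ pow_dvd_pow t (by omega)) ht

theorem mul_add_one_lt_pow {N t : ℕ} (hN : 2 ≤ N) (ht : 3 ≤ t) (hexc : ¬(N = 2 ∧ t = 3)) :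
    t * (N + 1) < N ^ t := by
  obtain rfl | ht4 := ht.eq_or_lt
  · nlinarith [pow_le_pow_left₀ (by omega : 0 ≤ 3) (by omega : 3 ≤ N) 2]
  induction t, ht4 using Nat.le_induction with
  | base => nlinarith [pow_le_pow_left₀ (by omega : 0 ≤ 2) hN 2]
  | succ s hs ih =>
    have h1 := Nat.mul_lt_mul_of_pos_left (ih (by omega) (by omega)) (by omega : 0 < N)
    have h2 : 2 * (s * (N + 1)) ≤ N * (s * (N + 1)) := Nat.mul_le_mul_right _ hN
    rw [pow_succ]
    nlinarith

theorem self_lt_cyclotomic_eval_of_prime {t : ℕ} (ht : t.Prime) {x : ℤ} (hx : 2 ≤ x) :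
    (t : ℤ) < (cyclotomic t ℤ).eval x := by
  have := Fact.mk ht
  rw [cyclotomic_prime, eval_geom_sum]
  calc (t : ℤ) = ∑ _i ∈ range t, 1 := by simp
    _ < ∑ i ∈ range t, x ^ i :=
      sum_lt_sum (fun i _ => one_le_pow₀ (by omega))
        ⟨1, mem_range.mpr ht.one_lt, by rw [pow_one]; omega⟩

theorem cyclotomic_mul_prime_eval_ne_of_lt_pow {N m t : ℕ} (ht : t.Prime) (htm : ¬t ∣ m)
    (hm : 2 ≤ m) (hN : 1 < N) (hNt : t * (N + 1) < N ^ t) :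
    (cyclotomic (m * t) ℤ).eval (N : ℤ) ≠ t := by
  intro h
  have hcast : ∀ j y : ℕ,
      (cyclotomic j ℝ).eval (y : ℝ) = (((cyclotomic j ℤ).eval (y : ℤ) : ℤ) : ℝ) :=
    fun j y => by simpa using cyclotomic.eval_apply (y : ℤ) j (Int.castRingHom ℝ)
  have hexp := congrArg (eval (N : ℝ)) (cyclotomic_expand_eq_cyclotomic_mul ht htm ℝ)
  rw [expand_eval, eval_mul, hcast (m * t), h, Int.cast_natCast] at hexp
  have hNR : (1 : ℝ) < N := by exact_mod_cast hN
  have hφ : 0 < m.totient := Nat.totient_pos.mpr (by omega)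
  have hNt' : (t : ℝ) * (N + 1) ≤ (N : ℝ) ^ t - 1 := by
    have : ((t * (N + 1) + 1 : ℕ) : ℝ) ≤ ((N ^ t : ℕ) : ℝ) := by exact_mod_cast hNt
    push_cast at this
    linarith
  have := calc ((N : ℝ) ^ t - 1) ^ m.totient
      < (cyclotomic m ℝ).eval ((N : ℝ) ^ t) :=
        sub_one_pow_totient_lt_cyclotomic_eval hm (one_lt_pow₀ hNR ht.ne_zero)
    _ = t * (cyclotomic m ℝ).eval (N : ℝ) := hexp
    _ ≤ t * ((N : ℝ) + 1) ^ m.totient := by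
        gcongr
        exact cyclotomic_eval_le_add_one_pow_totient hNR m
    _ ≤ (t : ℝ) ^ m.totient * ((N : ℝ) + 1) ^ m.totient := by
        gcongr
        exact le_self_pow₀ (by exact_mod_cast ht.one_lt.le) hφ.ne'
    _ = ((t : ℝ) * (N + 1)) ^ m.totient := (mul_pow _ _ _).symm
    _ ≤ ((N : ℝ) ^ t - 1) ^ m.totient := by gcongr
  exact lt_irrefl _ this

theorem cyclotomic_mul_prime_eval_ne {N m t : ℕ} (hN : 2 ≤ N) (ht : t.Prime)
    (hm : m ∣ t - 1) (hexc : ¬(N = 2 ∧ m * t = 6)) : (cyclotomic (m * t) ℤ).eval (N : ℤ) ≠ t := by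
  have ht2 := ht.two_le
  have hmt : m ≤ t - 1 := Nat.le_of_dvd (by omega) hm
  obtain rfl | hm2 : m = 1 ∨ 2 ≤ m := by
    have := Nat.pos_of_dvd_of_pos hm (by omega)
    omega
  · rw [one_mul]
    exact (self_lt_cyclotomic_eval_of_prime ht (by exact_mod_cast hN)).ne'
  · refine cyclotomic_mul_prime_eval_ne_of_lt_pow ht (fun h => ?_) hm2 hN
      (mul_add_one_lt_pow hN (by omega) ?_)
    · exact absurd (Nat.le_of_dvd (by omega) h) (by omega)
    · rintro ⟨rfl, rfl⟩
      exact hexc ⟨rfl, by have := Nat.le_of_dvd (by omega) hm; omega⟩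

theorem cyclotomic_prime_pow_succ_mul_eval_ne {n t a m : ℕ} (hn : 1 < n) (ht : t.Prime)
    (hm : m ∣ t - 1) (hexc : ¬(n = 2 ∧ t ^ (a + 1) * m = 6)) :
    (cyclotomic (t ^ (a + 1) * m) ℤ).eval (n : ℤ) ≠ t := by
  have hN : n ≤ n ^ t ^ a := Nat.le_self_pow (pow_ne_zero _ ht.ne_zero) n
  have h := cyclotomic_mul_prime_eval_ne (N := n ^ t ^ a) (by omega) ht hm ?_
  · rwa [Nat.cast_pow, ← expand_eval, expand_prime_pow_cyclotomic ℤ ht (dvd_mul_left t m),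
      show m * t * t ^ a = t ^ (a + 1) * m by ring] at h
  rintro ⟨hN2, hmt⟩
  obtain rfl : n = 2 := by omega
  obtain rfl : a = 0 :=
    (Nat.pow_eq_one.mp ((Nat.pow_eq_self_iff one_lt_two).mp hN2)).resolve_left ht.ne_one
  exact hexc ⟨rfl, by rw [← hmt]; ring⟩

end Zsigmondy

open Zsigmondy in
/-- Zsigmondy's theorem: for `n > 1`, `k ≥ 3`, `(n,k) ≠ (2,6)`, the number `n^k - 1`
has a primitive prime divisor, i.e. a prime `t ∣ n^k - 1` with `t ∤ n^i - 1` for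
all `1 ≤ i ≤ k - 1`. -/
theorem stmt1 (n k : ℕ) (hn : 1 < n) (hk : 3 ≤ k) (hnk : ¬(n = 2 ∧ k = 6)) :
    ∃ t : ℕ, t.Prime ∧ t ∣ n ^ k - 1 ∧ ∀ i : ℕ, 1 ≤ i → i ≤ k - 1 → ¬ t ∣ n ^ i - 1 := by
  by_contra! hnone
  set c := (cyclotomic k ℤ).eval (n : ℤ)
  have hstruct : ∀ t, t.Prime → t ∣ c.natAbs →
      ∃ a m, k = t ^ (a + 1) * m ∧ ¬t ∣ m ∧ m ∣ t - 1 := by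
    intro t ht htc
    have htc' := Int.natCast_dvd.mpr htc
    obtain ⟨i, hi, hik, hti⟩ := hnone t ht (dvd_pow_sub_one_of_dvd_cyclotomic_eval (by omega) htc')
    exact exists_eq_pow_succ_mul_of_dvd_cyclotomic_eval (by omega) ht (by omega) htc' hi
      (by omega) hti
  have hc1 : c.natAbs ≠ 1 := by
    have := sub_one_lt_natAbs_cyclotomic_eval (n := k) (q := n) (by omega) (by omega)
    omega
  obtain ⟨t, ht, htc⟩ := Nat.exists_prime_and_dvd hc1
  obtain ⟨a, m, rfl, htm, hm⟩ := hstruct t ht htc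
  have hct : c.natAbs = t := by
    refine eq_of_unique_prime_dvd_of_not_sq_dvd hc1 (fun s hs hsc => ?_) fun hsq => ?_
    · obtain ⟨b, m', hk', -, hm'⟩ := hstruct s hs hsc
      exact eq_of_prime_pow_succ_mul_eq hs ht hm hm' hk'.symm
    · refine not_sq_dvd_cyclotomic_eval ht htm (Int.natCast_dvd.mpr htc) ?_
        (by exact_mod_cast Int.natCast_dvd.mpr hsq)
      rintro rfl
      exact Nat.pos_of_ne_zero (by rintro rfl; simp [Nat.dvd_one.mp hm] at hk)
  apply cyclotomic_prime_pow_succ_mul_eval_ne hn ht hm hnk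
  rw [← Int.natAbs_of_nonneg (cyclotomic_pos' _ (by exact_mod_cast hn)).le, hct]
end

section
/- Let q^b be a square, V' = F_{q^b}^n with the Hermitian form κ'(x,y) = Σ_i x_i y_i^{q^{b/2}} and H'(x) = κ'(x,x) ∈ F_{q^{b/2}}. Suppose n is odd. Then for every a ∈ F_{q^{b/2}}^*, the number of vectors x ∈ V' with H'(x) = a equals q^{(bn−b)/2}(q^{bn/2}+1), where d = bn. -/
/-!
Write `N n a` (`hermitianCount r n a`) for the number of `x ∈ E^n` with `∑ x_i^(r+1) = a`.
The norm `t ↦ t^(r+1)` maps `E^*` onto the nonzero fixed points of `t ↦ t^r`, with all fibres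
of size `r + 1`: fibres have at most `r + 1` elements, there are at most `r - 1` nonzero fixed
points, and `|E^*| = (r-1)(r+1)`. Splitting off the last coordinate, and using that `N n`
vanishes off the fixed field, which is stable under `c ↦ a - c` for fixed `a`, gives
`N (n+1) a + r N n a = (r+1) r^(2n)`; hence `r N n a = r^(2n) - (-r)^n` for fixed `a ≠ 0`,
which for odd `n` is the claim.
-/

open Finset

namespace Finset

variable {ι κ : Type*} [DecidableEq κ]

theorem card_fiber_eq_of_card_eq_mul {s : Finset ι} {t : Finset κ} {f : ι → κ} {k m : ℕ}
    (hf : (s : Set ι).MapsTo f t) (hfib : ∀ b ∈ t, #{a ∈ s | f a = b} ≤ m) (ht : #t ≤ k)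
    (hs : #s = k * m) : ∀ b ∈ t, #{a ∈ s | f a = b} = m := by
  refine (sum_eq_sum_iff_of_le hfib).1 (le_antisymm (sum_le_sum hfib) ?_)
  calc ∑ _b ∈ t, m = #t * m := by rw [sum_const, smul_eq_mul]
    _ ≤ k * m := Nat.mul_le_mul_right m ht
    _ = ∑ b ∈ t, #{a ∈ s | f a = b} := hs ▸ card_eq_sum_card_fiberwise hf

theorem card_filter_sum_fin_succ {α G : Type*} [Fintype α] [AddCommGroup G] [DecidableEq G]
    (f : α → G) (n : ℕ) (a : G) :
    #{x : Fin (n + 1) → α | ∑ i, f (x i) = a}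
      = ∑ t, #{x : Fin n → α | ∑ i, f (x i) = a - f t} := by
  simp only [card_filter]
  rw [← Fintype.sum_equiv (Fin.consEquiv fun _ => α) _ _ (fun _ => rfl), Fintype.sum_prod_type]
  refine sum_congr rfl fun t _ => sum_congr rfl fun y _ => ?_
  simp [Fin.sum_univ_succ, eq_sub_iff_add_eq, add_comm]

end Finset

theorem card_filter_pow_eq_le {R : Type*} [CommRing R] [IsDomain R] [Fintype R] [DecidableEq R]
    {n : ℕ} (hn : 0 < n) (c : R) : #{t : R | t ^ n = c} ≤ n := by
  calc #{t : R | t ^ n = c} ≤ #(Polynomial.nthRoots n c).toFinset :=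
        card_le_card fun t ht => by simpa [Polynomial.mem_nthRoots hn] using ht
    _ ≤ n := (Multiset.toFinset_card_le _).trans (Polynomial.card_nthRoots n c)

namespace FiniteField

variable {E : Type*} [Field E] [Fintype E] {r : ℕ}

theorem exists_ringHom_eq_pow (hr : r ∣ Fintype.card E) : ∃ φ : E →+* E, ∀ x, φ x = x ^ r := by
  obtain ⟨p, hchar⟩ := CharP.exists E
  obtain ⟨k, hp, hk⟩ := FiniteField.card E p
  obtain ⟨m, -, rfl⟩ := (Nat.dvd_prime_pow hp).1 (hk ▸ hr)
  have := Fact.mk hp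
  exact ⟨iterateFrobenius E p m, fun _ => rfl⟩

theorem one_lt_of_card_eq_sq (hcard : Fintype.card E = r ^ 2) : 1 < r :=
  (Nat.one_lt_pow_iff two_ne_zero).1 (hcard ▸ Fintype.one_lt_card)

theorem pow_pow_eq_self (hcard : Fintype.card E = r ^ 2) (x : E) : (x ^ r) ^ r = x := by
  rw [← pow_mul, ← sq, ← hcard, FiniteField.pow_card]

theorem pow_succ_pow_eq (hcard : Fintype.card E = r ^ 2) (t : E) :
    (t ^ (r + 1)) ^ r = t ^ (r + 1) := by
  rw [pow_succ, mul_pow, pow_pow_eq_self hcard, mul_comm]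

variable [DecidableEq E]

theorem mapsTo_pow_succ (hcard : Fintype.card E = r ^ 2) :
    ((univ.erase 0 : Finset E) : Set E).MapsTo (· ^ (r + 1))
      ({c : E | c ≠ 0 ∧ c ^ r = c} : Finset E) := fun t ht => by
  simp_all [pow_succ_pow_eq hcard]

theorem card_filter_pow_succ_eq (hcard : Fintype.card E = r ^ 2) {c : E} (hc0 : c ≠ 0)
    (hc : c ^ r = c) : #{t : E | t ^ (r + 1) = c} = r + 1 := by
  have hr := one_lt_of_card_eq_sq hcard
  have hfib : ∀ b ∈ ({c : E | c ≠ 0 ∧ c ^ r = c} : Finset E),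
      #{t ∈ univ.erase 0 | t ^ (r + 1) = b} ≤ r + 1 := fun b _ =>
    (card_le_card (filter_subset_filter _ (subset_univ _))).trans
      (card_filter_pow_eq_le r.succ_pos b)
  have hfixed : #{c : E | c ≠ 0 ∧ c ^ r = c} ≤ r - 1 := by
    refine (card_le_card fun c hc => ?_).trans (card_filter_pow_eq_le (by omega) (1 : E))
    simp only [mem_filter, mem_univ, true_and] at hc ⊢
    refine mul_right_cancel₀ hc.1 ?_
    rw [← pow_succ, Nat.sub_add_cancel hr.le, hc.2, one_mul]
  have hunits : #(univ.erase (0 : E)) = (r - 1) * (r + 1) := by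
    rw [card_erase_of_mem (mem_univ _), card_univ, hcard, mul_comm, ← Nat.sq_sub_sq, one_pow]
  have := card_fiber_eq_of_card_eq_mul (mapsTo_pow_succ hcard) hfib hfixed hunits c
    (by simp [hc0, hc])
  rwa [filter_erase, erase_eq_of_notMem (by simp [hc0.symm])] at this

theorem sum_comp_pow_succ {M : Type*} [AddCommMonoid M] (hcard : Fintype.card E = r ^ 2)
    (g : E → M) :
    ∑ t, g (t ^ (r + 1)) = g 0 + (r + 1) • ∑ c ∈ ({c : E | c ≠ 0 ∧ c ^ r = c} : Finset E), g c := by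
  rw [← add_sum_erase univ _ (mem_univ 0), zero_pow r.succ_ne_zero,
    ← sum_fiberwise_of_maps_to (mapsTo_pow_succ hcard), smul_sum]
  refine congrArg _ (sum_congr rfl fun c hc => ?_)
  simp only [mem_filter, mem_univ, true_and] at hc
  rw [sum_congr rfl fun t ht => by rw [(mem_filter.1 ht).2], sum_const, filter_erase,
    erase_eq_of_notMem (by simp [hc.1.symm]), card_filter_pow_succ_eq hcard hc.1 hc.2]

def hermitianCount (r n : ℕ) (a : E) : ℕ := #{x : Fin n → E | ∑ i, x i ^ (r + 1) = a}

theorem hermitianCount_eq_zero (hcard : Fintype.card E = r ^ 2) (n : ℕ) {a : E}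
    (ha : a ^ r ≠ a) : hermitianCount r n a = 0 := by
  obtain ⟨φ, hφ⟩ := exists_ringHom_eq_pow (hcard ▸ dvd_pow_self r two_ne_zero)
  refine card_eq_zero.2 (filter_eq_empty_iff.2 fun x _ hx => ha ?_)
  rw [← hx, ← hφ, map_sum]
  exact sum_congr rfl fun i _ => (hφ _).trans (pow_succ_pow_eq hcard _)

theorem sum_hermitianCount_sub (hcard : Fintype.card E = r ^ 2) (n : ℕ) (a : E) :
    ∑ c, hermitianCount r n (a - c) = r ^ (2 * n) := by
  refine ((Equiv.subLeft a).sum_comp (hermitianCount r n)).trans ?_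
  unfold hermitianCount
  rw [← card_eq_sum_card_fiberwise (fun _ _ => mem_univ _), card_univ, Fintype.card_fun, hcard,
    Fintype.card_fin, pow_mul]

theorem hermitianCount_succ_add (hcard : Fintype.card E = r ^ 2) (n : ℕ) {a : E}
    (ha : a ^ r = a) :
    hermitianCount r (n + 1) a + r * hermitianCount r n a = (r + 1) * r ^ (2 * n) := by
  obtain ⟨φ, hφ⟩ := exists_ringHom_eq_pow (hcard ▸ dvd_pow_self r two_ne_zero)
  have hrec : hermitianCount r (n + 1) a = hermitianCount r n a
      + (r + 1) * ∑ c ∈ ({c : E | c ≠ 0 ∧ c ^ r = c} : Finset E), hermitianCount r n (a - c) := by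
    have := sum_comp_pow_succ hcard fun c => hermitianCount r n (a - c)
    rw [sub_zero, smul_eq_mul] at this
    exact (card_filter_sum_fin_succ (· ^ (r + 1)) n a).trans this
  have hfixed : ∑ c ∈ ({c : E | c ≠ 0 ∧ c ^ r = c} : Finset E), hermitianCount r n (a - c)
      = ∑ c ∈ univ.erase 0, hermitianCount r n (a - c) := by
    refine sum_subset (fun c hc => by simp_all) fun c hc hcK => hermitianCount_eq_zero hcard n ?_
    simp only [mem_erase, mem_filter, mem_univ, and_true, true_and] at hc hcK
    rw [← hφ, map_sub, hφ, hφ, ha, Ne, sub_right_inj]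
    exact fun h => hcK ⟨hc, h⟩
  have htotal := add_sum_erase univ (fun c => hermitianCount r n (a - c)) (mem_univ 0)
  rw [sub_zero, sum_hermitianCount_sub hcard] at htotal
  rw [hrec, hfixed, ← htotal]
  ring

theorem hermitianCount_mul_eq (hcard : Fintype.card E = r ^ 2) {a : E} (ha0 : a ≠ 0)
    (ha : a ^ r = a) (n : ℕ) :
    (r : ℤ) * hermitianCount r n a = r ^ (2 * n) - (-r : ℤ) ^ n := by
  induction n with
  | zero => simp [hermitianCount, ha0.symm]
  | succ n ih =>
    have hsucc : (hermitianCount r (n + 1) a + r * hermitianCount r n a : ℤ)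
        = (r + 1) * r ^ (2 * n) := by
      exact_mod_cast hermitianCount_succ_add hcard n ha
    linear_combination (r : ℤ) * hsucc - (r : ℤ) * ih

end FiniteField

theorem stmt7_general (E : Type*) [Field E] [Fintype E] [DecidableEq E]
    (r n : ℕ) (hcard : Fintype.card E = r ^ 2)
    (hn : Odd n)
    (a : E) (ha : a ≠ 0) (haF : a ^ r = a) :
    (Finset.univ.filter fun x : Fin n → E => (∑ i, x i * x i ^ r) = a).card
      = r ^ (n - 1) * (r ^ n + 1) := by
  have hcount := FiniteField.hermitianCount_mul_eq hcard ha haF n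
  simp only [FiniteField.hermitianCount, pow_succ'] at hcount
  rw [hn.neg_pow] at hcount
  obtain ⟨m, rfl⟩ : ∃ m, n = m + 1 := ⟨n - 1, (Nat.sub_add_cancel hn.pos).symm⟩
  refine Nat.eq_of_mul_eq_mul_left (FiniteField.one_lt_of_card_eq_sq hcard).le
    (Int.ofNat_inj.1 ?_)
  push_cast
  rw [hcount]
  ring

/-- Let `E = F_{q^b}` with `q^b = r^2` a square (`r = q^{b/2}`), and on `V' = E^n`
(`n` odd) consider the Hermitian form `H'(x) = Σ_i x_i·x_i^r`, with values in the
subfield `F_r = {a : a^r = a}`.  For every `a ∈ F_r^*`, the number of `x ∈ V'` with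
`H'(x) = a` equals `r^{n-1}(r^n + 1) = q^{(bn-b)/2}(q^{bn/2}+1)`. -/
theorem stmt7 (E : Type*) [Field E] [Fintype E] [DecidableEq E]
    (r n : ℕ) (hr : 1 < r) (hcard : Fintype.card E = r ^ 2)
    (hn : Odd n)
    (a : E) (ha : a ≠ 0) (haF : a ^ r = a) :
    (Finset.univ.filter fun x : Fin n → E => (∑ i, x i * x i ^ r) = a).card
      = r ^ (n - 1) * (r ^ n + 1) :=
  stmt7_general E r n hcard hn a ha haF
end

section
/- Let q^b be a square, V' = F_{q^b}^n with Hermitian form κ'(x,y) = Σ_i x_i y_i^{q^{b/2}} and H'(x) = κ'(x,x). Let T be a subset of F_{q^{b/2}}^*, D = {x ∈ V' : H'(x) ∈ T}, and for nonzero a ∈ V' define ψ_a(x) = ψ_{F_{q^b}}(κ'(a,x)). Then Σ_{x∈D} ψ_a(x) = (−1)^n · q^{(bn−b)/2} · Σ_{t∈T} K(ψ_{F_{q^{b/2}}}, t, H'(a)). -/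
/-- The canonical additive character `ψ_K(x) = exp(2πi·Tr_{K/F_p}(x)/p)` of a finite
field `K` of characteristic `p`. -/
noncomputable def canChar (p : ℕ) (K : Type*) [Field K] [Fintype K] [Algebra (ZMod p) K]
    (x : K) : ℂ :=
  Complex.exp (2 * Real.pi * Complex.I * ((Algebra.trace (ZMod p) K x).val : ℂ) / (p : ℂ))

/-- The Kloosterman sum `K(ψ_F, a1, a2) = Σ_{x ∈ F^*} ψ_F(a1 x + a2 x^{-1})`. -/
noncomputable def kloosterman (p : ℕ) (F : Type*) [Field F] [Fintype F] [DecidableEq F]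
    [Algebra (ZMod p) F] (a1 a2 : F) : ℂ :=
  ∑ x : Fˣ, canChar p F (a1 * (x : F) + a2 * (x : F)⁻¹)

/-!
Detect the condition `H'(x) ∈ T` with the characters `u ↦ ψ_F(u (H'(x) - t))` of `F`. For fixed
`u` the resulting sum over `x ∈ E^n` factors over the coordinates. For `u = 0` it vanishes since
`a ≠ 0`. For `u ≠ 0`, completing the square `u N(y) + Tr(c y^r) = u N(y + c/u) - N(c)/u` reduces
each factor to the Gauss-type sum `∑_y ψ_F(u N(y))`, which equals `-r`: it does not depend on
`u ≠ 0` because the norm is surjective, and summing it over all `u` gives `r`. What remains is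
`(-r)^n ∑_{u ≠ 0} ψ_F(-u t - H'(a)/u)`, a Kloosterman sum.
-/

open Finset

section CanonicalCharacter

variable (p : ℕ) [Fact p.Prime] (K : Type*) [Field K] [Fintype K] [Algebra (ZMod p) K]

noncomputable def canAddChar : AddChar K ℂ :=
  ZMod.stdAddChar.compAddMonoidHom (Algebra.trace (ZMod p) K).toAddMonoidHom

lemma canAddChar_apply (x : K) : canAddChar p K x = canChar p K x := by
  rw [canChar, ← ZMod.toCircle_apply, ← ZMod.stdAddChar_apply]
  rfl

lemma canAddChar_isPrimitive : (canAddChar p K).IsPrimitive := by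
  refine AddChar.IsPrimitive.of_ne_one fun h => ?_
  obtain ⟨x, hx⟩ := Algebra.trace_surjective (ZMod p) K 1
  have : ZMod.stdAddChar (1 : ZMod p) = ZMod.stdAddChar (0 : ZMod p) := by
    simpa [canAddChar, hx] using DFunLike.congr_fun h x
  exact one_ne_zero (ZMod.injective_stdAddChar this)

lemma canChar_eq_canAddChar_trace (F : Type*) [Field F] [Fintype F] [Algebra (ZMod p) F]
    [Algebra F K] [IsScalarTower (ZMod p) F K] (z : K) :
    canChar p K z = canAddChar p F (Algebra.trace F K z) := by
  rw [canAddChar_apply, canChar, canChar, Algebra.trace_trace]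

end CanonicalCharacter

lemma AddChar.map_sum_eq_prod {A M ι : Type*} [AddCommMonoid A] [CommMonoid M]
    (ψ : AddChar A M) (s : Finset ι) (f : ι → A) : ψ (∑ i ∈ s, f i) = ∏ i ∈ s, ψ (f i) := by
  classical
  induction s using Finset.induction_on with
  | empty => simp
  | insert i s hi ih => rw [sum_insert hi, prod_insert hi, AddChar.map_add_eq_mul, ih]

lemma pow_card_pow_card {F E : Type*} [Fintype F] [Field E] [Fintype E]
    (hcard : Fintype.card E = Fintype.card F ^ 2) (z : E) :
    (z ^ Fintype.card F) ^ Fintype.card F = z := by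
  rw [← pow_mul, ← sq, ← hcard, FiniteField.pow_card]

section QuadraticExtension

variable {F E : Type*} [Field F] [Field E] [Fintype F] [Algebra F E]

lemma add_pow_card (x y : E) :
    (x + y) ^ Fintype.card F = x ^ Fintype.card F + y ^ Fintype.card F := by
  simpa using map_add (FiniteField.frobeniusAlgHom F E) x y

lemma algebraMap_pow_card (s : F) : algebraMap F E s ^ Fintype.card F = algebraMap F E s := by
  rw [← map_pow, FiniteField.pow_card]

variable [Fintype E]

lemma finrank_eq_two_of_card_eq_sq (hcard : Fintype.card E = Fintype.card F ^ 2) :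
    Module.finrank F E = 2 :=
  Nat.pow_right_injective Fintype.one_lt_card (Module.card_eq_pow_finrank.symm.trans hcard)

lemma algebraMap_trace_eq_add_pow (hcard : Fintype.card E = Fintype.card F ^ 2) (z : E) :
    algebraMap F E (Algebra.trace F E z) = z + z ^ Fintype.card F := by
  rw [FiniteField.algebraMap_trace_eq_sum_pow, finrank_eq_two_of_card_eq_sq hcard,
    Nat.card_eq_fintype_card]
  simp [sum_range_succ]

lemma algebraMap_norm_eq_mul_pow (hcard : Fintype.card E = Fintype.card F ^ 2) (z : E) :
    algebraMap F E (Algebra.norm F z) = z * z ^ Fintype.card F := by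
  rw [FiniteField.algebraMap_norm_eq_prod_pow, finrank_eq_two_of_card_eq_sq hcard,
    Nat.card_eq_fintype_card]
  simp [prod_range_succ]

lemma algebraMap_sum_norm (hcard : Fintype.card E = Fintype.card F ^ 2) {n : ℕ}
    (x : Fin n → E) :
    algebraMap F E (∑ i, Algebra.norm F (x i)) = ∑ i, x i * x i ^ Fintype.card F := by
  simp [algebraMap_norm_eq_mul_pow hcard]

lemma mul_norm_add_trace_eq (hcard : Fintype.card E = Fintype.card F ^ 2) {u : F} (hu : u ≠ 0)
    (c y : E) :
    u * Algebra.norm F y + Algebra.trace F E (c * y ^ Fintype.card F) =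
      u * Algebra.norm F (y + c / algebraMap F E u) - Algebra.norm F c / u := by
  apply (algebraMap F E).injective
  have hu' : algebraMap F E u ≠ 0 := by simpa using hu
  simp only [map_add, map_sub, map_mul, map_div₀, algebraMap_norm_eq_mul_pow hcard,
    algebraMap_trace_eq_add_pow hcard, add_pow_card, div_pow, mul_pow, algebraMap_pow_card,
    pow_card_pow_card hcard]
  field_simp
  ring

end QuadraticExtension

section NormCharacterSums

variable {F E : Type*} [Field F] [Field E] [Fintype E] [Algebra F E] {ψ : AddChar F ℂ}

lemma sum_addChar_mul_norm_eq_of_ne_zero {u : F} (hu : u ≠ 0) :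
    ∑ y : E, ψ (u * Algebra.norm F y) = ∑ y : E, ψ (Algebra.norm F y) := by
  obtain ⟨z, rfl⟩ := FiniteField.norm_surjective F E u
  have hz : z ≠ 0 := by rintro rfl; simp at hu
  exact Fintype.sum_equiv (Equiv.mulLeft₀ z hz) _ _ fun y => by simp

variable [Fintype F]

lemma sum_sum_addChar_mul_norm (hψ : ψ.IsPrimitive) :
    ∑ u : F, ∑ y : E, ψ (u * Algebra.norm F y) = Fintype.card F := by
  classical
  rw [sum_comm]
  simp_rw [AddChar.sum_mulShift _ hψ, Algebra.norm_eq_zero_iff]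
  simp

theorem card_sub_one_mul_sum_addChar_mul_norm (hψ : ψ.IsPrimitive) {u : F} (hu : u ≠ 0) :
    (Fintype.card F - 1 : ℂ) * ∑ y : E, ψ (u * Algebra.norm F y) =
      Fintype.card F - Fintype.card E := by
  classical
  have htotal := sum_sum_addChar_mul_norm (E := E) hψ
  rw [← add_sum_erase _ _ (mem_univ 0),
    sum_congr rfl fun v hv => sum_addChar_mul_norm_eq_of_ne_zero (ne_of_mem_erase hv),
    sum_const, card_erase_of_mem (mem_univ _), card_univ] at htotal
  simp only [zero_mul, AddChar.map_zero_eq_one, sum_const, card_univ, nsmul_eq_mul,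
    mul_one] at htotal
  rw [Nat.cast_sub Fintype.card_pos] at htotal
  push_cast at htotal
  rw [sum_addChar_mul_norm_eq_of_ne_zero hu]
  linear_combination htotal

lemma sum_addChar_mul_norm_of_card_eq_sq (hcard : Fintype.card E = Fintype.card F ^ 2)
    (hψ : ψ.IsPrimitive) {u : F} (hu : u ≠ 0) :
    ∑ y : E, ψ (u * Algebra.norm F y) = -Fintype.card F := by
  have hr : (Fintype.card F - 1 : ℂ) ≠ 0 := by
    rw [sub_ne_zero]
    exact_mod_cast Fintype.one_lt_card.ne'
  apply mul_left_cancel₀ hr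
  rw [card_sub_one_mul_sum_addChar_mul_norm hψ hu, hcard]
  push_cast
  ring

theorem sum_addChar_mul_norm_add_trace (hcard : Fintype.card E = Fintype.card F ^ 2)
    (hψ : ψ.IsPrimitive) {u : F} (hu : u ≠ 0) (c : E) :
    ∑ y : E, ψ (u * Algebra.norm F y + Algebra.trace F E (c * y ^ Fintype.card F)) =
      -Fintype.card F * ψ (-(Algebra.norm F c / u)) := by
  simp_rw [mul_norm_add_trace_eq hcard hu, sub_eq_add_neg, AddChar.map_add_eq_mul, ← sum_mul]
  rw [Fintype.sum_equiv (Equiv.addRight (c / algebraMap F E u))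
    (fun y => ψ (u * Algebra.norm F (y + c / algebraMap F E u)))
    (fun y => ψ (u * Algebra.norm F y)) fun y => rfl,
    sum_addChar_mul_norm_of_card_eq_sq hcard hψ hu]

lemma sum_addChar_trace_mul_pow_card_eq_zero (hψ : ψ.IsPrimitive) {c : E} (hc : c ≠ 0) :
    ∑ y : E, ψ (Algebra.trace F E (c * y ^ Fintype.card F)) = 0 := by
  classical
  set ψE := ψ.compAddMonoidHom (Algebra.trace F E).toAddMonoidHom
  have hψE : ψE.IsPrimitive := AddChar.IsPrimitive.of_ne_one fun h => by
    obtain ⟨s, hs⟩ := AddChar.ne_one_iff.mp (hψ one_ne_zero)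
    obtain ⟨z, rfl⟩ := Algebra.trace_surjective F E s
    exact hs (by simpa [ψE] using DFunLike.congr_fun h z)
  refine (Fintype.sum_equiv (FiniteField.frobeniusAlgEquivOfAlgebraic F E).toEquiv _
    (fun y => ψE (y * c)) fun y => by simp [ψE, mul_comm]).trans ?_
  simpa [hc] using AddChar.sum_mulShift c hψE

lemma sum_pi_addChar_norm_mul_addChar_trace_eq_prod {n : ℕ} (u : F) (a : Fin n → E) :
    ∑ x : Fin n → E, ψ (u * ∑ i, Algebra.norm F (x i)) *
        ψ (Algebra.trace F E (∑ i, a i * x i ^ Fintype.card F)) =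
      ∏ i, ∑ y : E, ψ (u * Algebra.norm F y + Algebra.trace F E (a i * y ^ Fintype.card F)) := by
  rw [Fintype.prod_sum]
  refine sum_congr rfl fun x _ => ?_
  simp only [mul_sum, map_sum, AddChar.map_sum_eq_prod, AddChar.map_add_eq_mul, prod_mul_distrib]

end NormCharacterSums

section AddCharacterSums

variable {F : Type*} [Field F] [Fintype F] [DecidableEq F]

noncomputable def kloostermanSum (ψ : AddChar F ℂ) (a b : F) : ℂ :=
  ∑ v : Fˣ, ψ (a * v + b * (v : F)⁻¹)

variable {ψ : AddChar F ℂ}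

lemma kloostermanSum_eq_sum_filter_ne_zero (a b : F) :
    kloostermanSum ψ a b = ∑ u ∈ univ.filter (· ≠ 0), ψ (-(u * a) - b / u) := by
  refine sum_bij' (fun v _ => -(v : F)) (fun u hu => Units.mk0 (-u) (by simpa using hu))
    (by simp) (by simp) (fun v _ => Units.ext (by simp)) (by simp) fun v _ => ?_
  ring_nf

theorem card_mul_sum_filter_mem_eq {X : Type*} [Fintype X] (hψ : ψ.IsPrimitive) (Q : X → F)
    (f : X → ℂ) (T : Finset F) :
    Fintype.card F * ∑ x ∈ univ.filter (fun x => Q x ∈ T), f x =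
      ∑ t ∈ T, ∑ u : F, ψ (-(u * t)) * ∑ x, ψ (u * Q x) * f x := by
  have hdetect : ∀ t x, ∑ u : F, ψ (-(u * t)) * (ψ (u * Q x) * f x) =
      if Q x = t then Fintype.card F * f x else 0 := by
    intro t x
    simp_rw [← mul_assoc, ← AddChar.map_add_eq_mul, ← sum_mul,
      show ∀ u : F, -(u * t) + u * Q x = u * (Q x - t) from fun u => by ring,
      AddChar.sum_mulShift _ hψ, sub_eq_zero]
    split_ifs <;> simp
  simp_rw [mul_sum, sum_comm (s := (univ : Finset F)), hdetect, ← sum_filter, ← mul_sum]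
  rw [← sum_fiberwise_of_maps_to (g := Q) (t := T) fun x hx => (mem_filter.mp hx).2]
  refine congrArg _ (sum_congr rfl fun t ht => ?_)
  rw [filter_filter]
  exact sum_congr (filter_congr fun x _ => ⟨And.right, fun h => ⟨h ▸ ht, h⟩⟩) fun _ _ => rfl

end AddCharacterSums

section HermitianExponentialSum

variable {F E : Type*} [Field F] [Field E] [Fintype F] [Fintype E] [DecidableEq F] [Algebra F E]
  {ψ : AddChar F ℂ}

lemma sum_pi_addChar_norm_mul_addChar_trace_eq
    (hcard : Fintype.card E = Fintype.card F ^ 2) (hψ : ψ.IsPrimitive) {n : ℕ} {a : Fin n → E}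
    (ha : a ≠ 0) (u : F) :
    ∑ x : Fin n → E, ψ (u * ∑ i, Algebra.norm F (x i)) *
        ψ (Algebra.trace F E (∑ i, a i * x i ^ Fintype.card F)) =
      if u = 0 then 0 else (-Fintype.card F : ℂ) ^ n * ψ (-((∑ i, Algebra.norm F (a i)) / u)) := by
  rw [sum_pi_addChar_norm_mul_addChar_trace_eq_prod]
  split_ifs with hu
  · obtain ⟨i, hi⟩ := Function.ne_iff.mp ha
    refine prod_eq_zero (mem_univ i) ?_
    simpa [hu] using sum_addChar_trace_mul_pow_card_eq_zero hψ hi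
  · simp_rw [sum_addChar_mul_norm_add_trace hcard hψ hu, prod_mul_distrib, prod_const, card_univ,
      Fintype.card_fin, ← AddChar.map_sum_eq_prod, sum_div, sum_neg_distrib]

theorem sum_filter_sum_norm_mem_addChar_trace_eq (hcard : Fintype.card E = Fintype.card F ^ 2)
    (hψ : ψ.IsPrimitive) {n : ℕ} (T : Finset F) {a : Fin n → E} (ha : a ≠ 0) :
    ∑ x ∈ univ.filter (fun x : Fin n → E => ∑ i, Algebra.norm F (x i) ∈ T),
        ψ (Algebra.trace F E (∑ i, a i * x i ^ Fintype.card F)) =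
      (-1) ^ n * Fintype.card F ^ (n - 1) *
        ∑ t ∈ T, kloostermanSum ψ t (∑ i, Algebra.norm F (a i)) := by
  obtain _ | m := n
  · exact absurd (Subsingleton.elim _ _) ha
  have hr : (Fintype.card F : ℂ) ≠ 0 := Nat.cast_ne_zero.mpr Fintype.card_ne_zero
  apply mul_left_cancel₀ hr
  rw [card_mul_sum_filter_mem_eq hψ, mul_sum, mul_sum]
  refine sum_congr rfl fun t _ => ?_
  simp_rw [sum_pi_addChar_norm_mul_addChar_trace_eq hcard hψ ha,
    kloostermanSum_eq_sum_filter_ne_zero, mul_sum, sum_filter]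
  refine sum_congr rfl fun u _ => ?_
  by_cases hu : u = 0
  · simp [hu]
  · rw [if_neg hu, if_pos hu, sub_eq_add_neg, AddChar.map_add_eq_mul, Nat.add_sub_cancel]
    ring

end HermitianExponentialSum

open Classical in
theorem stmt8_general (p : ℕ) [Fact p.Prime] (F E : Type*) [Field F] [Field E]
    [Fintype F] [Fintype E] [DecidableEq F] [Algebra (ZMod p) F] [Algebra (ZMod p) E]
    [Algebra F E] [IsScalarTower (ZMod p) F E]
    (hcard : Fintype.card E = Fintype.card F ^ 2)
    (n : ℕ) (T : Finset F)
    (a : Fin n → E) (ha : a ≠ 0)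
    (H'a : F) (hH'a : algebraMap F E H'a = ∑ i, a i * a i ^ Fintype.card F) :
    ∑ x ∈ (Finset.univ.filter fun x : Fin n → E =>
        (∑ i, x i * x i ^ Fintype.card F) ∈ T.image (algebraMap F E)),
      canChar p E (∑ i, a i * x i ^ Fintype.card F)
    = (-1 : ℂ) ^ n * (Fintype.card F : ℂ) ^ (n - 1) *
        ∑ t ∈ T, kloosterman p F t H'a := by
  have hH : H'a = ∑ i, Algebra.norm F (a i) :=
    (algebraMap F E).injective (by rw [hH'a, algebraMap_sum_norm hcard])
  have hD : (univ.filter fun x : Fin n → E =>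
        (∑ i, x i * x i ^ Fintype.card F) ∈ T.image (algebraMap F E)) =
      univ.filter fun x => ∑ i, Algebra.norm F (x i) ∈ T := by
    ext x
    simp only [mem_filter, mem_univ, true_and, ← algebraMap_sum_norm hcard,
      (algebraMap F E).injective.mem_finset_image]
  have hK : ∀ t, kloosterman p F t H'a = kloostermanSum (canAddChar p F) t H'a := fun t => by
    simp only [kloosterman, kloostermanSum, canAddChar_apply]
  simp_rw [hD, canChar_eq_canAddChar_trace p E F, hK, hH]
  exact sum_filter_sum_norm_mem_addChar_trace_eq hcard (canAddChar_isPrimitive p F) T ha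

open Classical in
/-- Let `E = F_{q^b}` of square order, `F = F_{q^{b/2}}` its index-2 subfield
(`r := |F| = q^{b/2}`), `V' = E^n` with Hermitian form `κ'(x,y) = Σ_i x_i y_i^r`
and `H'(x) = κ'(x,x) ∈ F`.  For a subset `T ⊆ F^*`, `D = {x : H'(x) ∈ T}`, and a
nonzero `a ∈ V'` with `H'(a)` (as an element of `F`):
`Σ_{x∈D} ψ_E(κ'(a,x)) = (−1)^n · r^{n−1} · Σ_{t∈T} K(ψ_F, t, H'(a))`. -/
theorem stmt8 (p : ℕ) [Fact p.Prime] (F E : Type*) [Field F] [Field E]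
    [Fintype F] [Fintype E] [DecidableEq F] [Algebra (ZMod p) F] [Algebra (ZMod p) E]
    [Algebra F E] [IsScalarTower (ZMod p) F E]
    (hcard : Fintype.card E = Fintype.card F ^ 2)
    (n : ℕ) (T : Finset F) (hT : ∀ t ∈ T, t ≠ 0)
    (a : Fin n → E) (ha : a ≠ 0)
    (H'a : F) (hH'a : algebraMap F E H'a = ∑ i, a i * a i ^ Fintype.card F) :
    ∑ x ∈ (Finset.univ.filter fun x : Fin n → E =>
        (∑ i, x i * x i ^ Fintype.card F) ∈ T.image (algebraMap F E)),
      canChar p E (∑ i, a i * x i ^ Fintype.card F)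
    = (-1 : ℂ) ^ n * (Fintype.card F : ℂ) ^ (n - 1) *
        ∑ t ∈ T, kloosterman p F t H'a :=
  stmt8_general p F E hcard n T a ha H'a hH'a
end

section
/- Let q be an even prime power, E = F_{q^2}, and T a subset of E^* invariant under multiplication by F_q^*, with T = F_q^* · T0 for a transversal T0. Then for every u ∈ E^*: Σ_{t∈T} K(ψ_E, t, u) = |T0| − q|T0| + q^2 · #{t ∈ T0 : ut ∈ F_q^*}. -/
open Finset Module

section Aux

noncomputable def psiChar (K : Type*) [Field K] [Fintype K] [Algebra (ZMod 2) K] :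
    AddChar K ℂ where
  toFun x := (-1 : ℂ) ^ (Algebra.trace (ZMod 2) K x).val
  map_zero_eq_one' := by simp
  map_add_eq_mul' a b := by
    simp only [map_add, ← pow_add]
    rw [ZMod.val_add]
    conv_rhs => rw [← Nat.div_add_mod
      ((Algebra.trace (ZMod 2) K a).val + (Algebra.trace (ZMod 2) K b).val) 2]
    rw [pow_add, pow_mul, neg_one_sq, one_pow, one_mul]

variable {K : Type*} [Field K] [Fintype K] [Algebra (ZMod 2) K]

lemma psiChar_apply (x : K) :
    psiChar K x = (-1 : ℂ) ^ (Algebra.trace (ZMod 2) K x).val := rfl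

lemma canChar_eq_psiChar (x : K) : canChar 2 K x = psiChar K x := by
  rw [canChar, psiChar_apply]
  have h : (Algebra.trace (ZMod 2) K x).val < 2 := ZMod.val_lt _
  interval_cases h' : (Algebra.trace (ZMod 2) K x).val
  · simp
  · push_cast
    rw [pow_one]
    rw [show 2 * (Real.pi : ℂ) * Complex.I * 1 / 2 = Real.pi * Complex.I by ring]
    exact Complex.exp_pi_mul_I

lemma psiChar_ne_one : psiChar K ≠ (1 : AddChar K ℂ) := by
  obtain ⟨x, hx⟩ := Algebra.trace_surjective (ZMod 2) K 1
  intro h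
  have := congrArg (fun ψ : AddChar K ℂ => ψ x) h
  simp only [psiChar_apply, hx, AddChar.one_apply] at this
  norm_num [ZMod.val_one] at this

lemma sum_psiChar_all [DecidableEq K] (d : K) :
    ∑ c : K, psiChar K (c * d) = if d = 0 then (Fintype.card K : ℂ) else 0 := by
  rw [AddChar.sum_mulShift d (AddChar.IsPrimitive.of_ne_one psiChar_ne_one)]
  split_ifs <;> simp

lemma sum_psiChar_ne [DecidableEq K] (d : K) :
    ∑ c ∈ univ.filter (fun c : K => c ≠ 0), psiChar K (c * d)
      = if d = 0 then (Fintype.card K : ℂ) - 1 else -1 := by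
  have h0 : (univ : Finset K).filter (fun c => c ≠ 0) = univ.erase 0 := by
    ext x; simp [Finset.mem_erase, and_comm]
  have := Finset.add_sum_erase univ (fun c : K => psiChar K (c * d)) (mem_univ 0)
  rw [h0]
  have h1 : psiChar K (0 * d) = 1 := by rw [zero_mul]; exact AddChar.map_zero_eq_one _
  rw [sum_psiChar_all] at this
  split_ifs at this ⊢ with h <;> rw [h1] at this <;> linear_combination this

lemma sum_units_ne {M : Type*} [GroupWithZero M] [Fintype M] [DecidableEq M] (g : M → ℂ) :
    ∑ x : Mˣ, g ↑x = ∑ y ∈ univ.filter (fun y : M => y ≠ 0), g y := by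
  rw [Finset.sum_subtype (p := fun y : M => y ≠ 0)
    (univ.filter fun y : M => y ≠ 0) (fun y => by simp) g]
  exact Fintype.sum_equiv unitsEquivNeZero _ _ (fun x => rfl)

lemma sum_units_inv {M : Type*} [GroupWithZero M] [Fintype M] [DecidableEq M] (g : M → ℂ) :
    ∑ x : Mˣ, g ((x : M)⁻¹) = ∑ x : Mˣ, g ↑x := by
  refine Fintype.sum_equiv (Equiv.inv Mˣ) _ _ fun x => ?_
  simp [Units.val_inv_eq_inv_val]

end Aux

section Two

variable (F E : Type*) [Field F] [Field E] [Fintype F] [Fintype E] [DecidableEq E] [DecidableEq F]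
    [Algebra (ZMod 2) F] [Algebra (ZMod 2) E] [Algebra F E] [IsScalarTower (ZMod 2) F E]

lemma trace_tower (c : F) (y : E) :
    Algebra.trace (ZMod 2) E (algebraMap F E c * y)
      = Algebra.trace (ZMod 2) F (c * Algebra.trace F E y) := by
  rw [← Algebra.smul_def, ← Algebra.trace_trace (S := F), map_smul, smul_eq_mul]

lemma trace_zero_iff (hcard : Fintype.card E = Fintype.card F ^ 2) (y : E) :
    Algebra.trace F E y = 0 ↔ ∃ c : F, algebraMap F E c = y := by
  have hfr : finrank F E = 2 := by
    have h := card_eq_pow_finrank (K := F) (V := E)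
    rw [hcard] at h
    exact (Nat.pow_right_injective Fintype.one_lt_card h.symm)
  have hchar : CharP F 2 := charP_of_injective_ringHom (algebraMap (ZMod 2) F).injective 2
  have hle : LinearMap.range (Algebra.linearMap F E) ≤ LinearMap.ker (Algebra.trace F E) := by
    rintro x ⟨c, rfl⟩
    simp only [Algebra.linearMap_apply, LinearMap.mem_ker, Algebra.trace_algebraMap, hfr]
    haveI := hchar
    rw [two_smul]
    exact CharTwo.add_self_eq_zero c
  have hrange : LinearMap.range (Algebra.trace F E) = ⊤ := by
    rw [LinearMap.range_eq_top]
    exact Algebra.trace_surjective F E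
  have hker : finrank F (LinearMap.ker (Algebra.trace F E)) = 1 := by
    have h := LinearMap.finrank_range_add_finrank_ker (Algebra.trace F E)
    rw [hrange, finrank_top, finrank_self, hfr] at h
    omega
  have hrg : finrank F (LinearMap.range (Algebra.linearMap F E)) = 1 := by
    rw [LinearMap.finrank_range_of_inj (algebraMap F E).injective, finrank_self]
  have heq : LinearMap.range (Algebra.linearMap F E) = LinearMap.ker (Algebra.trace F E) :=
    Submodule.eq_of_le_of_finrank_le hle (by rw [hker, hrg])
  constructor
  · intro h
    obtain ⟨c, hc⟩ := heq ▸ LinearMap.mem_ker.mpr h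
    exact ⟨c, hc⟩
  · rintro ⟨c, rfl⟩
    exact LinearMap.mem_ker.mp (heq ▸ LinearMap.mem_range_self (Algebra.linearMap F E) c)

lemma sum_psiE_ne (y : E) :
    ∑ c ∈ univ.filter (fun c : F => c ≠ 0), psiChar E (algebraMap F E c * y)
      = if Algebra.trace F E y = 0 then (Fintype.card F : ℂ) - 1 else -1 := by
  have h : ∀ c : F, psiChar E (algebraMap F E c * y) = psiChar F (c * Algebra.trace F E y) :=
    fun c => by rw [psiChar_apply, psiChar_apply, trace_tower]
  simp_rw [h]
  exact sum_psiChar_ne _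

lemma image_inv_alg (t0 : E) (ht0 : t0 ≠ 0)
    (hcard : Fintype.card E = Fintype.card F ^ 2) :
    (univ.filter (fun c : F => c ≠ 0)).image (fun c => (algebraMap F E c)⁻¹ * t0⁻¹)
      = univ.filter (fun y : E => y ≠ 0 ∧ Algebra.trace F E (t0 * y) = 0) := by
  have hiff := trace_zero_iff F E hcard
  ext z
  simp only [mem_image, mem_filter, mem_univ, true_and]
  constructor
  · rintro ⟨c, hc, rfl⟩
    have hac : algebraMap F E c ≠ 0 :=
      fun h => hc ((algebraMap F E).injective (h.trans (map_zero _).symm))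
    refine ⟨by simp [hac, ht0], ?_⟩
    rw [hiff]
    exact ⟨c⁻¹, by rw [map_inv₀]; field_simp⟩
  · rintro ⟨hz, htr⟩
    obtain ⟨c, hc⟩ := (hiff _).mp htr
    have hc0 : c ≠ 0 := by
      rintro rfl
      rw [map_zero] at hc
      exact mul_ne_zero ht0 hz hc.symm
    refine ⟨c⁻¹, inv_ne_zero hc0, ?_⟩
    rw [map_inv₀, inv_inv, hc]
    field_simp

lemma innerSumAux (hcard : Fintype.card E = Fintype.card F ^ 2)
    (u t0 : E) (hu : u ≠ 0) (ht0 : t0 ≠ 0) :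
    ∑ c ∈ univ.filter (fun c : F => c ≠ 0), kloosterman 2 E (algebraMap F E c * t0) u
      = (Fintype.card F : ℂ) ^ 2
          * (if ∃ c : F, c ≠ 0 ∧ algebraMap F E c = u * t0 then 1 else 0)
        - (Fintype.card F : ℂ) + 1 := by
  simp only [kloosterman, canChar_eq_psiChar]
  rw [Finset.sum_comm]
  have step1 : ∀ x : Eˣ, ∑ c ∈ univ.filter (fun c : F => c ≠ 0),
      psiChar E (algebraMap F E c * t0 * ↑x + u * (↑x : E)⁻¹)
      = (Fintype.card F : ℂ)
          * ((if Algebra.trace F E (t0 * ↑x) = 0 then 1 else 0) * psiChar E (u * (↑x : E)⁻¹))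
        - psiChar E (u * (↑x : E)⁻¹) := by
    intro x
    have h : ∀ c : F, psiChar E (algebraMap F E c * t0 * ↑x + u * (↑x : E)⁻¹)
        = psiChar E (algebraMap F E c * (t0 * ↑x)) * psiChar E (u * (↑x : E)⁻¹) := by
      intro c; rw [← mul_assoc, AddChar.map_add_eq_mul]
    simp_rw [h]
    rw [← Finset.sum_mul, sum_psiE_ne]
    split_ifs <;> ring
  rw [Finset.sum_congr rfl (fun x _ => step1 x), Finset.sum_sub_distrib, ← Finset.mul_sum]
  have part1 : ∑ x : Eˣ, psiChar E (u * (↑x : E)⁻¹) = -1 := by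
    rw [sum_units_inv (fun y => psiChar E (u * y)), sum_units_ne (fun y => psiChar E (u * y))]
    simp_rw [mul_comm u]
    rw [sum_psiChar_ne]
    simp [hu]
  have part2 : ∑ x : Eˣ,
      (if Algebra.trace F E (t0 * ↑x) = 0 then (1 : ℂ) else 0) * psiChar E (u * (↑x : E)⁻¹)
      = if ∃ c : F, c ≠ 0 ∧ algebraMap F E c = u * t0 then (Fintype.card F : ℂ) - 1 else -1 := by
    rw [sum_units_ne (fun y =>
      (if Algebra.trace F E (t0 * y) = 0 then (1 : ℂ) else 0) * psiChar E (u * y⁻¹))]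
    simp_rw [ite_mul, one_mul, zero_mul]
    rw [← Finset.sum_filter, Finset.filter_filter, ← image_inv_alg F E t0 ht0 hcard,
      Finset.sum_image ?hinj]
    case hinj =>
      intro c1 h1 c2 h2 h
      have h' : (algebraMap F E c1)⁻¹ = (algebraMap F E c2)⁻¹ :=
        mul_right_cancel₀ (inv_ne_zero ht0) h
      exact (algebraMap F E).injective (inv_inj.mp h')
    · have harg : ∀ c : F, u * ((algebraMap F E c)⁻¹ * t0⁻¹)⁻¹ = algebraMap F E c * (u * t0) := by
        intro c
        rw [mul_inv_rev, inv_inv, inv_inv]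
        ring
      simp_rw [harg]
      rw [sum_psiE_ne]
      have hcond : (Algebra.trace F E (u * t0) = 0) ↔ ∃ c : F, c ≠ 0 ∧ algebraMap F E c = u * t0 := by
        rw [trace_zero_iff F E hcard]
        constructor
        · rintro ⟨c, hc⟩
          refine ⟨c, ?_, hc⟩
          rintro rfl
          rw [map_zero] at hc
          exact mul_ne_zero hu ht0 hc.symm
        · rintro ⟨c, _, hc⟩; exact ⟨c, hc⟩
      simp only [hcond]
  rw [part1, part2]
  split_ifs <;> ring

end Two

open Classical in
/-- Let `q` be even (characteristic 2), `E = F_{q^2}` with subfield `F = F_q`, and let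
`T ⊆ E^*` be `F_q^*`-invariant with transversal `T0` (so `T = F_q^*·T0`).  Then for
every `u ∈ E^*`:
`Σ_{t∈T} K(ψ_E,t,u) = |T0| − q|T0| + q^2·#{t ∈ T0 : u·t ∈ F_q^*}`. -/
theorem stmt9 (F E : Type*) [Field F] [Field E] [Fintype F] [Fintype E] [DecidableEq E]
    [Algebra (ZMod 2) F] [Algebra (ZMod 2) E] [Algebra F E] [IsScalarTower (ZMod 2) F E]
    (hcard : Fintype.card E = Fintype.card F ^ 2)
    (T T0 : Finset E)
    (hT0ne : ∀ t ∈ T0, t ≠ 0)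
    (hTrep : (T : Set E) = {x : E | ∃ c : F, c ≠ 0 ∧ ∃ t ∈ T0, x = algebraMap F E c * t})
    (hdistinct : ∀ t1 ∈ T0, ∀ t2 ∈ T0,
      (∃ c : F, c ≠ 0 ∧ algebraMap F E c * t1 = t2) → t1 = t2)
    (u : E) (hu : u ≠ 0) :
    ∑ t ∈ T, kloosterman 2 E t u
      = (T0.card : ℂ) - (Fintype.card F : ℂ) * T0.card
        + (Fintype.card F : ℂ) ^ 2 *
          ((T0.filter fun t => ∃ c : F, c ≠ 0 ∧ algebraMap F E c = u * t).card : ℂ) := by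
  classical
  have hT : T = (((univ.filter fun c : F => c ≠ 0) ×ˢ T0).image
      (fun p : F × E => algebraMap F E p.1 * p.2)) := by
    ext x
    have hx : x ∈ T ↔ ∃ c : F, c ≠ 0 ∧ ∃ t ∈ T0, x = algebraMap F E c * t := by
      rw [← Finset.mem_coe, hTrep]; rfl
    simp only [hx, mem_image, mem_product, mem_filter, mem_univ, true_and, Prod.exists]
    constructor
    · rintro ⟨c, hc, t, ht, rfl⟩; exact ⟨c, t, ⟨hc, ht⟩, rfl⟩
    · rintro ⟨c, t, ⟨hc, ht⟩, rfl⟩; exact ⟨c, hc, t, ht, rfl⟩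
  have hinj : ∀ p ∈ (univ.filter fun c : F => c ≠ 0) ×ˢ T0,
      ∀ p' ∈ (univ.filter fun c : F => c ≠ 0) ×ˢ T0,
      algebraMap F E p.1 * p.2 = algebraMap F E p'.1 * p'.2 → p = p' := by
    rintro ⟨c1, t1⟩ hp ⟨c2, t2⟩ hp' h
    simp only [mem_product, mem_filter, mem_univ, true_and] at hp hp'
    obtain ⟨hc1, ht1⟩ := hp; obtain ⟨hc2, ht2⟩ := hp'
    have ht1ne := hT0ne t1 ht1
    have hac2 : algebraMap F E c2 ≠ 0 :=
      fun hh => hc2 ((algebraMap F E).injective (hh.trans (map_zero _).symm))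
    have heq : t1 = t2 := by
      refine hdistinct t1 ht1 t2 ht2 ⟨c2⁻¹ * c1, mul_ne_zero (inv_ne_zero hc2) hc1, ?_⟩
      rw [map_mul, map_inv₀]
      field_simp
      linear_combination h
    subst heq
    have h2 : algebraMap F E c1 = algebraMap F E c2 := mul_right_cancel₀ ht1ne h
    have h3 := (algebraMap F E).injective h2
    simp [h3]
  rw [hT, Finset.sum_image hinj, Finset.sum_product_right]
  rw [Finset.sum_congr rfl (fun t0 ht0 => innerSumAux F E hcard u t0 hu (hT0ne t0 ht0))]
  rw [Finset.sum_add_distrib, Finset.sum_sub_distrib, ← Finset.mul_sum, Finset.sum_boole,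
    Finset.sum_const, Finset.sum_const]
  simp only [nsmul_eq_mul, mul_one, Finset.filter_congr_decidable]
  ring
end

section
/- Let q be odd, E = F_{q^2}, η the quadratic character of F_q^*, and let δ ∈ E^* with δ + δ^q = 0. Then for any t ∈ E^* and any complete set R of coset representatives of F_q^{*2} (nonzero squares) in E^*: Σ_{r∈R} η(Tr_{q^2/q}(rt)) · [[Tr_{q^2/q}(δ^2 r^{−1} t') = 0]] = 0 for each fixed t' ∈ E^*, because the two representatives r ∈ R with Tr(t' r^{−1}) = 0 differ by a nonsquare factor of F_q. -/
open Classical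

/-- The quadratic (Legendre) character `η` of `F_q^*`, extended by `η(0) = 0`. -/
noncomputable def quadChar (F : Type*) [Field F] [Fintype F] (x : F) : ℂ :=
  if x = 0 then 0 else if IsSquare x then 1 else -1

/-!
Multiplying a representative `r` by a nonsquare `a ∈ F_q^*` negates `η(Tr(r t))` and leaves
the condition `Tr(δ² r⁻¹ t') = 0` unchanged, since `Tr` is `F_q`-linear. Sending `r` to the
representative of `r a` is a fixed-point-free involution of `R` (a product of two nonsquares is a
square), so the terms of the sum cancel in pairs.
-/

lemma ne_zero_of_not_isSquare {M₀ : Type*} [MulZeroClass M₀] {a : M₀} (ha : ¬IsSquare a) :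
    a ≠ 0 :=
  fun h => ha (h ▸ IsSquare.zero)

lemma not_isSquare_div_sq {F : Type*} [Field F] {a c : F} (ha : ¬IsSquare a) (hc : c ≠ 0) :
    ¬IsSquare (a / c ^ 2) := by
  rintro ⟨s, hs⟩
  refine ha ⟨s * c, ?_⟩
  rw [div_eq_iff (pow_ne_zero 2 hc)] at hs
  rw [hs]
  ring

section QuadraticCharacter

variable {F : Type*} [Field F] [Fintype F]

lemma quadChar_eq_quadraticChar (x : F) : quadChar F x = quadraticChar F x := by
  rw [quadraticChar_apply, quadraticCharFun]
  by_cases h0 : x = 0 <;> by_cases hs : IsSquare x <;> simp [quadChar, h0, hs]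

lemma quadChar_mul_of_not_isSquare {a : F} (ha : ¬IsSquare a) (x : F) :
    quadChar F (a * x) = -quadChar F x := by
  simp only [quadChar_eq_quadraticChar, map_mul, quadraticChar_neg_one_iff_not_isSquare.mpr ha]
  push_cast
  ring

lemma isSquare_mul_of_not_isSquare {a b : F} (ha : ¬IsSquare a) (hb : ¬IsSquare b) :
    IsSquare (a * b) := by
  rw [← quadraticChar_one_iff_isSquare
      (mul_ne_zero (ne_zero_of_not_isSquare ha) (ne_zero_of_not_isSquare hb)), map_mul,
    quadraticChar_neg_one_iff_not_isSquare.mpr ha, quadraticChar_neg_one_iff_not_isSquare.mpr hb]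
  rfl

end QuadraticCharacter

structure IsSquareClassTransversal (F : Type*) {E : Type*} [Field F] [CommRing E] [Algebra F E]
    (R : Finset E) : Prop where
  ne_zero : ∀ r ∈ R, r ≠ 0
  exists_mem : ∀ e : E, e ≠ 0 → ∃ r ∈ R, ∃ c : F, c ≠ 0 ∧ e = r * algebraMap F E (c ^ 2)
  eq_of_eq_mul_sq : ∀ r1 ∈ R, ∀ r2 ∈ R,
    (∃ c : F, c ≠ 0 ∧ r2 = r1 * algebraMap F E (c ^ 2)) → r1 = r2

namespace IsSquareClassTransversal

variable {F E : Type*} [Field F] [Fintype F] [CommRing E] [IsDomain E] [Algebra F E]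
  {R : Finset E}

lemma exists_not_isSquare_mul_mem (hR : IsSquareClassTransversal F R) (hF : ringChar F ≠ 2)
    {r : E} (hr : r ∈ R) : ∃ a : F, ¬IsSquare a ∧ r * algebraMap F E a ∈ R := by
  obtain ⟨u, hu⟩ := FiniteField.exists_nonsquare hF
  have hu0 : algebraMap F E u ≠ 0 := by simpa using ne_zero_of_not_isSquare hu
  obtain ⟨r', hr', c, hc, he⟩ := hR.exists_mem _ (mul_ne_zero (hR.ne_zero r hr) hu0)
  refine ⟨u / c ^ 2, not_isSquare_div_sq hu hc, ?_⟩
  have hc2 : algebraMap F E (c ^ 2) ≠ 0 := by simpa using hc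
  convert hr' using 1
  apply mul_right_cancel₀ hc2
  rw [← he, mul_assoc, ← map_mul, div_mul_cancel₀ u (pow_ne_zero 2 hc)]

theorem sum_eq_zero {M : Type*} [AddCommGroup M] (hR : IsSquareClassTransversal F R)
    (hF : ringChar F ≠ 2) {f : E → M}
    (hf : ∀ r ∈ R, ∀ a : F, ¬IsSquare a → f (r * algebraMap F E a) = -f r) :
    ∑ r ∈ R, f r = 0 := by
  choose! a ha using fun r (hr : r ∈ R) => hR.exists_not_isSquare_mul_mem hF hr
  refine Finset.sum_involution (fun r _ => r * algebraMap F E (a r))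
    (fun r hr => by rw [hf r hr _ (ha r hr).1, add_neg_cancel]) ?_ (fun r hr => (ha r hr).2) ?_
  · intro r hr _ hfix
    rw [mul_eq_left₀ (hR.ne_zero r hr), map_eq_one_iff _ (algebraMap F E).injective] at hfix
    exact (ha r hr).1 (hfix ▸ IsSquare.one)
  · intro r hr
    obtain ⟨s, hs⟩ := isSquare_mul_of_not_isSquare (ha r hr).1 (ha _ (ha r hr).2).1
    have hs0 : s ≠ 0 := by
      rintro rfl
      rw [mul_zero, mul_eq_zero] at hs
      exact hs.elim (ne_zero_of_not_isSquare (ha r hr).1)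
        (ne_zero_of_not_isSquare (ha _ (ha r hr).2).1)
    refine (hR.eq_of_eq_mul_sq r hr _ (ha _ (ha r hr).2).2 ⟨s, hs0, ?_⟩).symm
    rw [mul_assoc, ← map_mul, hs, sq]

end IsSquareClassTransversal

lemma trace_algebraMap_mul {F E : Type*} [Field F] [Fintype F] [CommRing E] [Nontrivial E]
    [Algebra F E] {tr : E → F} (htr : ∀ y : E, algebraMap F E (tr y) = y + y ^ Fintype.card F)
    (c : F) (y : E) : tr (algebraMap F E c * y) = c * tr y := by
  apply (algebraMap F E).injective
  rw [htr, map_mul, htr, mul_pow, ← map_pow, FiniteField.pow_card]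
  ring

theorem stmt19_general (F E : Type*) [Field F] [Field E] [Fintype F] [Algebra F E]
    (hodd : Odd (Fintype.card F))
    (tr : E → F) (htr : ∀ y : E, algebraMap F E (tr y) = y + y ^ Fintype.card F)
    (δ : E)
    (R : Finset E) (hR0 : ∀ r ∈ R, r ≠ 0)
    (hcover : ∀ e : E, e ≠ 0 → ∃ r ∈ R, ∃ c : F, c ≠ 0 ∧ e = r * algebraMap F E (c ^ 2))
    (hdistinct : ∀ r1 ∈ R, ∀ r2 ∈ R,
      (∃ c : F, c ≠ 0 ∧ r2 = r1 * algebraMap F E (c ^ 2)) → r1 = r2)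
    (t t' : E) :
    ∑ r ∈ R, quadChar F (tr (r * t)) *
        (if tr (δ ^ 2 * r⁻¹ * t') = 0 then (1 : ℂ) else 0) = 0 := by
  have hF : ringChar F ≠ 2 := fun h => by
    have := FiniteField.even_card_of_char_two h
    rw [Nat.odd_iff] at hodd
    omega
  refine IsSquareClassTransversal.sum_eq_zero ⟨hR0, hcover, hdistinct⟩ hF fun r _ a ha => ?_
  have hnum : r * algebraMap F E a * t = algebraMap F E a * (r * t) := by ring
  have hden : δ ^ 2 * (r * algebraMap F E a)⁻¹ * t' =
      algebraMap F E a⁻¹ * (δ ^ 2 * r⁻¹ * t') := by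
    rw [mul_inv, map_inv₀]
    ring
  rw [hnum, hden, trace_algebraMap_mul htr, trace_algebraMap_mul htr,
    quadChar_mul_of_not_isSquare ha, mul_eq_zero,
    or_iff_right (inv_ne_zero (ne_zero_of_not_isSquare ha)), neg_mul]

/-- Let `q` be odd, `E = F_{q^2}`, `η` the quadratic character of `F_q^*` (with
`η(0)=0`), `δ ∈ E^*` with `δ + δ^q = 0`, and `R` a complete set of coset
representatives of the nonzero squares `F_q^{*2}` in `E^*`.  Then for any `t ∈ E^*`
and each fixed `t' ∈ E^*`:
`Σ_{r∈R} η(Tr_{q^2/q}(r·t)) · [[Tr_{q^2/q}(δ²·r⁻¹·t') = 0]] = 0`,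
the two representatives `r ∈ R` with `Tr(t'·r⁻¹) = 0` differing by a nonsquare factor
of `F_q`. -/
theorem stmt19 (F E : Type*) [Field F] [Field E] [Fintype F] [Fintype E] [Algebra F E]
    (hcard : Fintype.card E = Fintype.card F ^ 2)
    (hodd : Odd (Fintype.card F))
    (tr : E → F) (htr : ∀ y : E, algebraMap F E (tr y) = y + y ^ Fintype.card F)
    (δ : E) (hδ : δ ≠ 0) (hδtr : δ + δ ^ Fintype.card F = 0)
    (R : Finset E) (hR0 : ∀ r ∈ R, r ≠ 0)
    (hcover : ∀ e : E, e ≠ 0 → ∃ r ∈ R, ∃ c : F, c ≠ 0 ∧ e = r * algebraMap F E (c ^ 2))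
    (hdistinct : ∀ r1 ∈ R, ∀ r2 ∈ R,
      (∃ c : F, c ≠ 0 ∧ r2 = r1 * algebraMap F E (c ^ 2)) → r1 = r2)
    (t t' : E) (ht : t ≠ 0) (ht' : t' ≠ 0) :
    ∑ r ∈ R, quadChar F (tr (r * t)) *
        (if tr (δ ^ 2 * r⁻¹ * t') = 0 then (1 : ℂ) else 0) = 0 :=
  stmt19_general F E hodd tr htr δ R hR0 hcover hdistinct t t'
end
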